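/- Let a < b be real numbers and let X : ℝ × [a,b] → ℝ be a C¹ function with ∂X/∂y(x,y) > 0 for all (x,y), X(x+1,y) = X(x,y) + 1 for all (x,y), and X(x,a) < x < X(x,b) for all x ∈ ℝ. Then there exists a unique function y : ℝ → (a,b) such that X(x, y(x)) = x for all x ∈ ℝ; moreover y is C¹ and 1-periodic (y(x+1) = y(x) for all x). -/

import Mathlib

/-!
Each slice `X x` is strictly increasing on `[a, b]` and crosses the value `x` inside `(a, b)`, so
`X x y = x` has exactly one solution `y x`; uniqueness turns `X (x + 1) = X x + 1` into periodicity.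
For smoothness, the implicit function theorem applied to `X x y - x` near `(x₀, y x₀)` gives a `C¹`
local solution; by continuity it stays in `[a, b]`, where solutions are unique, so it is `y`.
-/

open Set Filter Topology

theorem continuousOn_of_derivWithin_ne_zero {𝕜 : Type*} [NontriviallyNormedField 𝕜]
    {f : 𝕜 → 𝕜} {s : Set 𝕜} (hf : ∀ x ∈ s, derivWithin f s x ≠ 0) : ContinuousOn f s :=
  fun x hx ↦ (differentiableWithinAt_of_derivWithin_ne_zero (hf x hx)).continuousWithinAt

theorem strictMonoOn_of_derivWithin_pos {D : Set ℝ} (hD : Convex ℝ D) {f : ℝ → ℝ}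
    (hf : ∀ x ∈ D, 0 < derivWithin f D x) : StrictMonoOn f D :=
  strictMonoOn_of_deriv_pos hD (continuousOn_of_derivWithin_ne_zero fun x hx ↦ (hf x hx).ne')
    fun x hx ↦ by
      rw [← derivWithin_of_mem_nhds (mem_interior_iff_mem_nhds.1 hx)]
      exact hf x (interior_subset hx)

theorem isInvertible_fderiv_comp_inr_of_hasDerivAt {𝕜 E : Type*} [NontriviallyNormedField 𝕜]
    [NormedAddCommGroup E] [NormedSpace 𝕜 E] {f : E × 𝕜 → 𝕜} {x : E} {y d : 𝕜}
    (hf : DifferentiableAt 𝕜 f (x, y)) (hd : HasDerivAt (fun t ↦ f (x, t)) d y) (hd₀ : d ≠ 0) :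
    (fderiv 𝕜 f (x, y) ∘L .inr 𝕜 E 𝕜).IsInvertible := by
  have hslice : HasFDerivAt (fun t ↦ f (x, t)) (fderiv 𝕜 f (x, y) ∘L .inr 𝕜 E 𝕜) y :=
    hf.hasFDerivAt.comp y (hasFDerivAt_prodMk_right x y)
  have hone : (fderiv 𝕜 f (x, y) ∘L .inr 𝕜 E 𝕜) 1 = d := hslice.hasDerivAt.unique hd
  refine ⟨ContinuousLinearEquiv.unitsEquivAut 𝕜 (Units.mk0 d hd₀), ?_⟩
  ext
  simp [hone]

theorem contDiffAt_of_apply_eq_of_injOn {𝕜 : Type*} [RCLike 𝕜]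
    {E₁ : Type*} [NormedAddCommGroup E₁] [NormedSpace 𝕜 E₁] [CompleteSpace E₁]
    {E₂ : Type*} [NormedAddCommGroup E₂] [NormedSpace 𝕜 E₂] [CompleteSpace E₂]
    {F : Type*} [NormedAddCommGroup F] [NormedSpace 𝕜 F] [CompleteSpace F]
    {n : WithTop ℕ∞} {f : E₁ × E₂ → F} {g : E₁ → E₂} {x₀ : E₁} {s : Set E₂}
    (hf : ContDiffAt 𝕜 n f (x₀, g x₀)) (hn : n ≠ 0)
    (hf₂ : (fderiv 𝕜 f (x₀, g x₀) ∘L .inr 𝕜 E₁ E₂).IsInvertible) (hs : s ∈ 𝓝 (g x₀))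
    (hinj : ∀ᶠ x in 𝓝 x₀, InjOn (fun y ↦ f (x, y)) s)
    (hg : ∀ᶠ x in 𝓝 x₀, g x ∈ s ∧ f (x, g x) = f (x₀, g x₀)) :
    ContDiffAt 𝕜 n g x₀ := by
  set ψ := hf.implicitFunction hn hf₂
  have hψ : ContDiffAt 𝕜 n ψ x₀ := hf.contDiffAt_implicitFunction hn hf₂
  have hψ₀ : ψ x₀ = g x₀ := hf.implicitFunction_apply_self hn hf₂
  have hψs : ∀ᶠ x in 𝓝 x₀, ψ x ∈ s := hψ.continuousAt.preimage_mem_nhds (hψ₀ ▸ hs)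
  have hgψ : g =ᶠ[𝓝 x₀] ψ := by
    filter_upwards [hinj, hg, hψs, hf.eventually_apply_implicitFunction hn hf₂]
      with x hx ⟨hgs, hgx⟩ hψx hψf
    exact hx hgs hψx (hgx.trans hψf.symm)
  exact hψ.congr_of_eventuallyEq hgψ

/-- **The generating curve of a twist map.**
If `X : ℝ × [a,b] → ℝ` is `C¹` with `∂X/∂y > 0`, `X(x+1,y) = X(x,y) + 1` and
`X(x,a) < x < X(x,b)`, then there is a unique function `y : ℝ → (a,b)` with
`X(x, y(x)) = x` for all `x`; moreover `y` is `C¹` and `1`-periodic. -/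
theorem twist_generating_curve (a b : ℝ) (hab : a < b) (X : ℝ → ℝ → ℝ)
    (hC1 : ContDiffOn ℝ 1 (fun p : ℝ × ℝ => X p.1 p.2) (Set.univ ×ˢ Set.Icc a b))
    (htwist : ∀ x : ℝ, ∀ y ∈ Set.Icc a b, 0 < derivWithin (X x) (Set.Icc a b) y)
    (hper : ∀ x : ℝ, ∀ y ∈ Set.Icc a b, X (x + 1) y = X x y + 1)
    (hbd : ∀ x : ℝ, X x a < x ∧ x < X x b) :
    ∃ y : ℝ → ℝ,
      (∀ x, y x ∈ Set.Ioo a b) ∧ (∀ x, X x (y x) = x) ∧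
      ContDiff ℝ 1 y ∧ (∀ x, y (x + 1) = y x) ∧
      (∀ y' : ℝ → ℝ, (∀ x, y' x ∈ Set.Ioo a b) → (∀ x, X x (y' x) = x) → y' = y) := by
  have hinj x : InjOn (X x) (Icc a b) :=
    (strictMonoOn_of_derivWithin_pos (convex_Icc a b) (htwist x)).injOn
  have hsol x : ∃ y ∈ Ioo a b, X x y = x :=
    intermediate_value_Ioo hab.le (continuousOn_of_derivWithin_ne_zero fun y hy ↦
      (htwist x y hy).ne') (hbd x)
  choose y hyI hyX using hsol
  have hsol_unique {x y'} (hy' : y' ∈ Ioo a b) (hy'X : X x y' = x) : y' = y x :=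
    hinj x (Ioo_subset_Icc_self hy') (Ioo_subset_Icc_self (hyI x)) (hy'X.trans (hyX x).symm)
  refine ⟨y, hyI, hyX, contDiff_iff_contDiffAt.2 fun x₀ ↦ ?_, fun x ↦ ?_,
    fun y' hy'I hy'X ↦ funext fun x ↦ hsol_unique (hy'I x) (hy'X x)⟩
  · have hy₀ : Icc a b ∈ 𝓝 (y x₀) := Icc_mem_nhds (hyI x₀).1 (hyI x₀).2
    have hF : ContDiffAt ℝ 1 (fun p : ℝ × ℝ ↦ X p.1 p.2 - p.1) (x₀, y x₀) :=
      (hC1.contDiffAt (prod_mem_nhds univ_mem hy₀)).sub contDiffAt_fst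
    have hd := htwist x₀ (y x₀) (mem_of_mem_nhds hy₀)
    have hslice : HasDerivAt (fun t ↦ X x₀ t - x₀) (derivWithin (X x₀) (Icc a b) (y x₀)) (y x₀) :=
      ((differentiableWithinAt_of_derivWithin_ne_zero hd.ne').hasDerivWithinAt.hasDerivAt
        hy₀).sub_const x₀
    refine contDiffAt_of_apply_eq_of_injOn hF one_ne_zero
      (isInvertible_fderiv_comp_inr_of_hasDerivAt (hF.differentiableAt one_ne_zero) hslice
        hd.ne') hy₀
      (Eventually.of_forall fun x y₁ h₁ y₂ h₂ h ↦ hinj x h₁ h₂ (sub_left_inj.1 h))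
      (Eventually.of_forall fun x ↦ ⟨Ioo_subset_Icc_self (hyI x), by simp [hyX]⟩)
  · refine (hsol_unique (hyI x) ?_).symm
    rw [hper x (y x) (Ioo_subset_Icc_self (hyI x)), hyX x]
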